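/- Assume A ∈ R^{n×n} is invertible and full AA, full NGMRES, and GMRES are applied to Ax = b with the same initial guess x_0 ≠ x*. Assume for some k_0 > 0 that r_{k_0−1}^G ≠ 0 and ‖r_{k−1}^G‖₂ > ‖r_k^G‖₂ for each k with 0 < k < k_0. Then for all 0 ≤ j ≤ k_0, the full NGMRES and GMRES iterates coincide, x_j^{NG} = x_j^G, and the full AA iterates satisfy x_{j+1}^A = q(x_j^{NG}) = x_j^{NG} − r_j^{NG}. -/

import Mathlib

/-!
While the GMRES residuals decrease strictly and do not vanish, every new GMRES iterate and every
new GMRES residual enlarges the Krylov space by exactly one dimension. For the residuals this is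
where invertibility enters: a residual falling back into `K_k` would make `K_k` invariant under `A`,
hence put `x*` in `x₀ + K_k`, and GMRES would already have converged. Consequently, as long as the
earlier iterates agree with GMRES, the NGMRES directions `q(x_k) - x_j` span `K_{k+1}` and the AA
directions `x_k - x_j` span `K_k`, so the NGMRES step and the AA least-squares step minimize the
same residual over the same affine space as GMRES. That minimizer is unique, since the Euclidean
norm is strictly convex and `A` is injective.
-/

open Matrix Filter

noncomputable section

/-- The residual `r(x) = A x - b` of the linear system `A x = b`. -/
def residv {n : ℕ} (A : Matrix (Fin n) (Fin n) ℝ) (b x : Fin n → ℝ) : Fin n → ℝ :=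
  A.mulVec x - b

/-- The Euclidean 2-norm on `Fin n → ℝ`. -/
def norm2 {n : ℕ} (x : Fin n → ℝ) : ℝ := Real.sqrt (x ⬝ᵥ x)

/-- The fixed-point map `q(x) = M x + b` with `M = I - A`. -/
def qmap {n : ℕ} (A : Matrix (Fin n) (Fin n) ℝ) (b x : Fin n → ℝ) : Fin n → ℝ :=
  (1 - A).mulVec x + b

/-- One NGMRES update from step `k`, with window `mk` and coefficients `β`:
`x_{k+1} = q(x_k) + ∑_{i=0}^{mk} β_i (q(x_k) - x_{k-i})`. -/
def ngmresUpdate {n : ℕ} (A : Matrix (Fin n) (Fin n) ℝ) (b : Fin n → ℝ)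
    (x : ℕ → Fin n → ℝ) (β : ℕ → ℝ) (k mk : ℕ) : Fin n → ℝ :=
  qmap A b (x k) + ∑ i ∈ Finset.range (mk + 1), β i • (qmap A b (x k) - x (k - i))

/-- The NGMRES iteration with window function `mk` (e.g. `mk k = min k m` for NGMRES(m),
`mk k = k` for full NGMRES): each step uses coefficients minimizing the 2-norm of the
next residual. -/
def IsNGMRES {n : ℕ} (A : Matrix (Fin n) (Fin n) ℝ) (b x0 : Fin n → ℝ) (mk : ℕ → ℕ)
    (x : ℕ → Fin n → ℝ) (β : ℕ → ℕ → ℝ) : Prop :=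
  x 0 = x0 ∧ ∀ k, x (k + 1) = ngmresUpdate A b x (β k) k (mk k) ∧
    ∀ β' : ℕ → ℝ, norm2 (residv A b (x (k + 1))) ≤
      norm2 (residv A b (ngmresUpdate A b x β' k (mk k)))

/-- The Krylov subspace `span {r0, A r0, …, A^{k-1} r0}`. -/
def krylov {n : ℕ} (A : Matrix (Fin n) (Fin n) ℝ) (r0 : Fin n → ℝ) (k : ℕ) :
    Submodule ℝ (Fin n → ℝ) :=
  Submodule.span ℝ {v | ∃ i < k, v = (A ^ i).mulVec r0}

/-- GMRES: `x_k` minimizes the residual 2-norm over the affine space `x0 + K_k`. -/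
def IsGMRES {n : ℕ} (A : Matrix (Fin n) (Fin n) ℝ) (b x0 : Fin n → ℝ)
    (x : ℕ → Fin n → ℝ) : Prop :=
  x 0 = x0 ∧ ∀ k, x k - x0 ∈ krylov A (residv A b x0) k ∧
    ∀ y : Fin n → ℝ, y - x0 ∈ krylov A (residv A b x0) k →
      norm2 (residv A b (x k)) ≤ norm2 (residv A b y)

/-- One Anderson acceleration update from step `k`, with window `mk`:
`x_{k+1} = q(x_k) + ∑_{i=1}^{mk} γ_i (q(x_k) - q(x_{k-i}))`. -/
def aaUpdate {n : ℕ} (A : Matrix (Fin n) (Fin n) ℝ) (b : Fin n → ℝ)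
    (x : ℕ → Fin n → ℝ) (γ : ℕ → ℝ) (k mk : ℕ) : Fin n → ℝ :=
  qmap A b (x k) + ∑ i ∈ Finset.Icc 1 mk, γ i • (qmap A b (x k) - qmap A b (x (k - i)))

/-- The Anderson acceleration least-squares objective
`r(x_k) + ∑_{i=1}^{mk} γ_i (r(x_k) - r(x_{k-i}))`. -/
def aaObj {n : ℕ} (A : Matrix (Fin n) (Fin n) ℝ) (b : Fin n → ℝ)
    (x : ℕ → Fin n → ℝ) (γ : ℕ → ℝ) (k mk : ℕ) : Fin n → ℝ :=
  residv A b (x k) + ∑ i ∈ Finset.Icc 1 mk, γ i • (residv A b (x k) - residv A b (x (k - i)))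

/-- Anderson acceleration with window function `mk`. -/
def IsAA {n : ℕ} (A : Matrix (Fin n) (Fin n) ℝ) (b x0 : Fin n → ℝ) (mk : ℕ → ℕ)
    (x : ℕ → Fin n → ℝ) (γ : ℕ → ℕ → ℝ) : Prop :=
  x 0 = x0 ∧ ∀ k, x (k + 1) = aaUpdate A b x (γ k) k (mk k) ∧
    ∀ γ' : ℕ → ℝ, norm2 (aaObj A b x (γ k) k (mk k)) ≤ norm2 (aaObj A b x γ' k (mk k))

/-- The spectral norm `‖A‖₂` (the ℓ²→ℓ² operator norm). -/
def specNorm {n : ℕ} (A : Matrix (Fin n) (Fin n) ℝ) : ℝ :=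
  ‖LinearMap.toContinuousLinearMap (Matrix.toEuclideanLin A)‖

/-- The spectral radius of a real matrix (computed over `ℂ`). -/
def specRad {n : ℕ} (M : Matrix (Fin n) (Fin n) ℝ) : ℝ :=
  (spectralRadius ℂ (M.map Complex.ofReal)).toReal

open Submodule

section Span

variable {K V ι : Type*} [DivisionRing K] [AddCommGroup V] [Module K V]

theorem span_insert_eq_span_insert_of_exchange {a v : V} {s : Set V}
    (hv : v ∈ span K (insert a s)) (hvs : v ∉ span K s) :
    span K (insert a s) = span K (insert v s) := by
  have hs : s ⊆ span K (insert v s) := subset_span.trans' (Set.subset_insert v s)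
  have hs' : s ⊆ span K (insert a s) := subset_span.trans' (Set.subset_insert a s)
  exact le_antisymm (span_le.mpr (Set.insert_subset (mem_span_insert_exchange hv hvs) hs))
    (span_le.mpr (Set.insert_subset hv hs'))

theorem span_image_sub_eq_sup {R M : Type*} [Ring R] [AddCommGroup M] [Module R M] (p : M)
    (z : ι → M) {s : Set ι} {j₀ : ι} (hj₀ : j₀ ∈ s) :
    span R ((fun j => p - z j) '' s) =
      span R {p - z j₀} ⊔ span R ((fun j => z j - z j₀) '' s) := by
  apply le_antisymm
  · refine span_le.mpr ?_
    rintro _ ⟨j, hj, rfl⟩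
    show p - z j ∈ _
    rw [← sub_sub_sub_cancel_right p (z j) (z j₀)]
    exact sub_mem (mem_sup_left (mem_span_singleton_self _))
      (mem_sup_right (subset_span ⟨j, hj, rfl⟩))
  · refine sup_le (span_le.mpr (Set.singleton_subset_iff.mpr (subset_span ⟨j₀, hj₀, rfl⟩)))
      (span_le.mpr ?_)
    rintro _ ⟨j, hj, rfl⟩
    show z j - z j₀ ∈ _
    rw [← sub_sub_sub_cancel_left (z j₀) (z j) p]
    exact sub_mem (subset_span ⟨j₀, hj₀, rfl⟩) (subset_span ⟨j, hj, rfl⟩)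

theorem Submodule.map_eq_self_of_map_le [FiniteDimensional K V] {f : V →ₗ[K] V}
    (hf : Function.Injective f) {W : Submodule K V} (h : W.map f ≤ W) : W.map f = W :=
  eq_of_le_of_finrank_eq h (LinearEquiv.finrank_eq (equivMapOfInjective f hf W)).symm

end Span

theorem image_tsub_range_succ (k : ℕ) :
    (k - ·) '' ↑(Finset.range (k + 1)) = (↑(Finset.range (k + 1)) : Set ℕ) := by
  ext j
  simp only [Set.mem_image, Finset.coe_range, Set.mem_Iio]
  exact ⟨fun ⟨i, _, hi⟩ => by omega, fun hj => ⟨k - j, by omega, by omega⟩⟩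

theorem image_tsub_Icc_one (k : ℕ) :
    (k - ·) '' ↑(Finset.Icc 1 k) = (↑(Finset.range k) : Set ℕ) := by
  ext j
  simp only [Set.mem_image, Finset.coe_Icc, Set.mem_Icc, Finset.coe_range, Set.mem_Iio]
  exact ⟨fun ⟨i, _, hi⟩ => by omega, fun hj => ⟨k - j, by omega, by omega⟩⟩

theorem span_image_sub_Icc_one {R M : Type*} [Ring R] [AddCommGroup M] [Module R M]
    (y : ℕ → M) (k : ℕ) :
    span R ((fun i => y (k + 1) - y (k + 1 - i)) '' ↑(Finset.Icc 1 (k + 1))) =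
      span R ((fun j => y j - y 0) '' ↑(Finset.range (k + 2))) := by
  rw [← Set.image_image (g := fun j => y (k + 1) - y j) (f := (k + 1 - ·)), image_tsub_Icc_one,
    span_image_sub_eq_sup _ _ (j₀ := 0) (by simp), Finset.range_add_one (n := k + 1),
    Finset.coe_insert, Set.image_insert_eq, span_insert]

variable {n : ℕ}

section Krylov

variable {A : Matrix (Fin n) (Fin n) ℝ} {r0 : Fin n → ℝ}

theorem krylov_zero : krylov A r0 0 = ⊥ := by
  simp [krylov]

theorem krylov_mono : Monotone (krylov A r0) :=
  fun _ _ h => span_mono fun _ ⟨i, hi, hv⟩ => ⟨i, hi.trans_le h, hv⟩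

theorem self_mem_krylov {k : ℕ} (hk : 0 < k) : r0 ∈ krylov A r0 k :=
  subset_span ⟨0, hk, by rw [pow_zero, one_mulVec]⟩

theorem mulVec_mem_krylov_succ {k : ℕ} {x : Fin n → ℝ} (hx : x ∈ krylov A r0 k) :
    A *ᵥ x ∈ krylov A r0 (k + 1) := by
  have hmap : (krylov A r0 k).map A.mulVecLin ≤ krylov A r0 (k + 1) := by
    rw [krylov, map_span, span_le]
    rintro _ ⟨_, ⟨i, hi, rfl⟩, rfl⟩
    exact subset_span ⟨i + 1, by omega, by simp [mulVec_mulVec, pow_succ']⟩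
  exact hmap ⟨x, hx, rfl⟩

theorem krylov_succ_eq_sup_of_notMem {k : ℕ} {v : Fin n → ℝ} (hv : v ∈ krylov A r0 (k + 1))
    (hvk : v ∉ krylov A r0 k) : krylov A r0 (k + 1) = span ℝ {v} ⊔ krylov A r0 k := by
  have hgen : {w | ∃ i < k + 1, w = (A ^ i) *ᵥ r0} =
      insert ((A ^ k) *ᵥ r0) {w | ∃ i < k, w = (A ^ i) *ᵥ r0} := by
    ext w
    simp only [Set.mem_insert_iff, Nat.lt_succ_iff_lt_or_eq]
    constructor
    · rintro ⟨i, hi | rfl, rfl⟩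
      exacts [Or.inr ⟨i, hi, rfl⟩, Or.inl rfl]
    · rintro (rfl | ⟨i, hi, rfl⟩)
      exacts [⟨k, Or.inr rfl, rfl⟩, ⟨i, Or.inl hi, rfl⟩]
  rw [krylov, hgen] at hv ⊢
  rw [span_insert_eq_span_insert_of_exchange hv hvk, span_insert, krylov]

theorem span_image_sub_eq_krylov {y : ℕ → Fin n → ℝ} {k : ℕ}
    (hy : ∀ m < k, y (m + 1) - y 0 ∈ krylov A r0 (m + 1) ∧ y (m + 1) - y 0 ∉ krylov A r0 m) :
    span ℝ ((fun j => y j - y 0) '' ↑(Finset.range (k + 1))) = krylov A r0 k := by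
  induction k with
  | zero => simp [krylov_zero]
  | succ k ih =>
    obtain ⟨hmem, hnotMem⟩ := hy k (by omega)
    rw [Finset.range_add_one, Finset.coe_insert, Set.image_insert_eq, span_insert,
      ih fun m hm => hy m (by omega), krylov_succ_eq_sup_of_notMem hmem hnotMem]

end Krylov

section Residual

variable (A : Matrix (Fin n) (Fin n) ℝ) (b : Fin n → ℝ)

theorem residv_eq_add_mulVec_sub (x y : Fin n → ℝ) :
    residv A b y = residv A b x + A *ᵥ (y - x) := by
  simp only [residv, mulVec_sub]
  abel

theorem qmap_eq_sub_residv (x : Fin n → ℝ) : qmap A b x = x - residv A b x := by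
  simp only [qmap, residv, sub_mulVec, one_mulVec]
  abel

theorem aaUpdate_eq_qmap (x : ℕ → Fin n → ℝ) (γ : ℕ → ℝ) (k mk : ℕ) :
    aaUpdate A b x γ k mk =
      qmap A b (x k + ∑ i ∈ Finset.Icc 1 mk, γ i • (x k - x (k - i))) := by
  simp only [aaUpdate, qmap, mulVec_add, mulVec_sum, mulVec_smul, mulVec_sub,
    add_sub_add_right_eq_sub, add_right_comm]

theorem aaObj_eq_residv (x : ℕ → Fin n → ℝ) (γ : ℕ → ℝ) (k mk : ℕ) :
    aaObj A b x γ k mk =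
      residv A b (x k + ∑ i ∈ Finset.Icc 1 mk, γ i • (x k - x (k - i))) := by
  simp only [aaObj, residv, mulVec_add, mulVec_sum, mulVec_smul, mulVec_sub,
    sub_sub_sub_cancel_right, sub_add_eq_add_sub]

theorem ngmresUpdate_congr {x y : ℕ → Fin n → ℝ} {k : ℕ} (h : ∀ j ≤ k, x j = y j)
    (β : ℕ → ℝ) (mk : ℕ) : ngmresUpdate A b x β k mk = ngmresUpdate A b y β k mk := by
  simp only [ngmresUpdate, h k le_rfl, h _ (Nat.sub_le k _)]

end Residual

section Norm

theorem norm2_nonneg (x : Fin n → ℝ) : 0 ≤ norm2 x := Real.sqrt_nonneg _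

theorem norm2_eq_zero {x : Fin n → ℝ} : norm2 x = 0 ↔ x = 0 := by
  rw [norm2, Real.sqrt_eq_zero (by simpa using dotProduct_star_self_nonneg x),
    dotProduct_self_eq_zero]

@[simp]
theorem norm2_zero : norm2 (0 : Fin n → ℝ) = 0 := norm2_eq_zero.mpr rfl

theorem norm2_le_norm2_iff {x y : Fin n → ℝ} : norm2 x ≤ norm2 y ↔ x ⬝ᵥ x ≤ y ⬝ᵥ y :=
  Real.sqrt_le_sqrt_iff (by simpa using dotProduct_star_self_nonneg y)

end Norm

def IsResidualMinimizer (A : Matrix (Fin n) (Fin n) ℝ) (b x0 : Fin n → ℝ)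
    (S : Submodule ℝ (Fin n → ℝ)) (x : Fin n → ℝ) : Prop :=
  x - x0 ∈ S ∧ ∀ y, y - x0 ∈ S → norm2 (residv A b x) ≤ norm2 (residv A b y)

namespace IsResidualMinimizer

variable {A : Matrix (Fin n) (Fin n) ℝ} {b x0 u v : Fin n → ℝ} {S : Submodule ℝ (Fin n → ℝ)}

/-- The midpoint of two minimizers is admissible and has residual `(r u + r v) / 2`; the
parallelogram law then forces `r u = r v`. -/
theorem residv_eq (hu : IsResidualMinimizer A b x0 S u) (hv : IsResidualMinimizer A b x0 S v) :
    residv A b u = residv A b v := by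
  set m := (2⁻¹ : ℝ) • (u + v)
  have hm : m - x0 ∈ S := by
    rw [show m - x0 = (2⁻¹ : ℝ) • ((u - x0) + (v - x0)) by module]
    exact S.smul_mem _ (S.add_mem hu.1 hv.1)
  have hrm : residv A b m = (2⁻¹ : ℝ) • (residv A b u + residv A b v) := by
    simp only [m, residv, mulVec_smul, mulVec_add]
    module
  set ru := residv A b u
  set rv := residv A b v
  have hmid := norm2_le_norm2_iff.mp (hu.2 m hm)
  have huv := norm2_le_norm2_iff.mp (hu.2 v hv.1)
  have hvu := norm2_le_norm2_iff.mp (hv.2 u hu.1)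
  rw [hrm] at hmid
  have hsq : (ru - rv) ⬝ᵥ (ru - rv) ≤ 0 := by
    simp only [smul_dotProduct, dotProduct_smul, add_dotProduct, dotProduct_add, sub_dotProduct,
      dotProduct_sub, dotProduct_comm rv ru, smul_eq_mul] at hmid ⊢
    linarith
  exact sub_eq_zero.mp (dotProduct_self_eq_zero.mp (le_antisymm hsq
    (by simpa using dotProduct_star_self_nonneg (ru - rv))))

theorem eq (hA : IsUnit A.det) (hu : IsResidualMinimizer A b x0 S u)
    (hv : IsResidualMinimizer A b x0 S v) : u = v :=
  mulVec_injective_of_det_ne_zero hA.ne_zero (sub_left_inj.mp (hu.residv_eq hv))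

end IsResidualMinimizer

theorem isResidualMinimizer_add_sum {ι : Type*} {A : Matrix (Fin n) (Fin n) ℝ}
    {b x0 p : Fin n → ℝ} {s : Finset ι} {g : ι → Fin n → ℝ} {c : ι → ℝ}
    (hp : p - x0 ∈ span ℝ (g '' s))
    (hmin : ∀ c' : ι → ℝ, norm2 (residv A b (p + ∑ i ∈ s, c i • g i)) ≤
      norm2 (residv A b (p + ∑ i ∈ s, c' i • g i))) :
    IsResidualMinimizer A b x0 (span ℝ (g '' s)) (p + ∑ i ∈ s, c i • g i) := by
  refine ⟨?_, fun y hy => ?_⟩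
  · rw [add_sub_right_comm]
    exact add_mem hp (sum_smul_mem _ _ fun i hi => subset_span ⟨i, hi, rfl⟩)
  · obtain ⟨c', hc'⟩ := (mem_span_image_finset_iff_exists_fun' ℝ).mp
      (sub_sub_sub_cancel_right y p x0 ▸ sub_mem hy hp)
    simpa [hc'] using hmin c'

namespace IsGMRES

variable {A : Matrix (Fin n) (Fin n) ℝ} {b x0 xstar : Fin n → ℝ} {xG : ℕ → Fin n → ℝ}
  (hG : IsGMRES A b x0 xG)
include hG

theorem residv_mem_krylov_succ (k : ℕ) :
    residv A b (xG k) ∈ krylov A (residv A b x0) (k + 1) := by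
  rw [residv_eq_add_mulVec_sub A b x0 (xG k)]
  exact add_mem (self_mem_krylov k.succ_pos) (mulVec_mem_krylov_succ (hG.2 k).1)

theorem qmap_sub_mem_krylov_succ (k : ℕ) :
    qmap A b (xG k) - x0 ∈ krylov A (residv A b x0) (k + 1) := by
  rw [qmap_eq_sub_residv, sub_right_comm]
  exact sub_mem (krylov_mono k.le_succ (hG.2 k).1) (hG.residv_mem_krylov_succ k)

theorem residv_ne_zero_of_le {j k : ℕ} (hjk : j ≤ k) (hk : residv A b (xG k) ≠ 0) :
    residv A b (xG j) ≠ 0 := fun hj =>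
  hk <| norm2_eq_zero.mp <| le_antisymm
    (by simpa [hj] using (hG.2 k).2 (xG j) (krylov_mono hjk (hG.2 j).1)) (norm2_nonneg _)

theorem sub_notMem_krylov_of_residv_ne_zero (hstar : A *ᵥ xstar = b) {k : ℕ}
    (hk : residv A b (xG k) ≠ 0) : xstar - x0 ∉ krylov A (residv A b x0) k := fun hmem =>
  hk <| norm2_eq_zero.mp <| le_antisymm
    (by simpa [residv, hstar] using (hG.2 k).2 xstar hmem) (norm2_nonneg _)

theorem sub_notMem_krylov_of_norm2_lt {m : ℕ}
    (hlt : norm2 (residv A b (xG (m + 1))) < norm2 (residv A b (xG m))) :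
    xG (m + 1) - x0 ∉ krylov A (residv A b x0) m := fun hmem =>
  (hG.2 m).2 _ hmem |>.not_gt hlt

theorem residv_succ_notMem_krylov (hA : IsUnit A.det) (hstar : A *ᵥ xstar = b) {m : ℕ}
    (hr : residv A b (xG (m + 1)) ≠ 0) (hnew : xG (m + 1) - x0 ∉ krylov A (residv A b x0) m) :
    residv A b (xG (m + 1)) ∉ krylov A (residv A b x0) (m + 1) := by
  intro hmem
  set K := krylov A (residv A b x0) (m + 1)
  have hsplit : K = span ℝ {xG (m + 1) - x0} ⊔ krylov A (residv A b x0) m :=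
    krylov_succ_eq_sup_of_notMem (hG.2 (m + 1)).1 hnew
  have hinv : K.map A.mulVecLin ≤ K := by
    rw [Submodule.map_le_iff_le_comap]
    conv_lhs => rw [hsplit]
    refine sup_le (span_le.mpr (Set.singleton_subset_iff.mpr ?_))
      fun x hx => mulVec_mem_krylov_succ hx
    show A *ᵥ (xG (m + 1) - x0) ∈ K
    rw [← add_sub_cancel_left (residv A b x0) (A *ᵥ (xG (m + 1) - x0)),
      ← residv_eq_add_mulVec_sub]
    exact sub_mem hmem (self_mem_krylov m.succ_pos)
  have hinj := mulVec_injective_of_det_ne_zero hA.ne_zero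
  obtain ⟨s, hs, hAs⟩ : residv A b x0 ∈ K.map A.mulVecLin :=
    (map_eq_self_of_map_le hinj hinv).symm ▸ self_mem_krylov m.succ_pos
  have hxstar : xstar - x0 = -s := hinj <| by
    simp only [mulVecLin_apply] at hAs
    rw [mulVec_sub, mulVec_neg, hAs, hstar, residv, neg_sub]
  exact hG.sub_notMem_krylov_of_residv_ne_zero hstar hr (hxstar ▸ neg_mem hs)

end IsGMRES

section StrictDecrease

variable {A : Matrix (Fin n) (Fin n) ℝ} {b x0 xstar : Fin n → ℝ} {xG : ℕ → Fin n → ℝ} {k0 : ℕ}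

theorem IsGMRES.span_iterates_eq_krylov (hG : IsGMRES A b x0 xG)
    (hdec : ∀ k, 0 < k → k < k0 →
      norm2 (residv A b (xG k)) < norm2 (residv A b (xG (k - 1)))) {k : ℕ} (hk : k < k0) :
    span ℝ ((fun j => xG j - xG 0) '' ↑(Finset.range (k + 1))) =
      krylov A (residv A b x0) k :=
  span_image_sub_eq_krylov fun m hm => by
    rw [hG.1]
    exact ⟨(hG.2 (m + 1)).1, hG.sub_notMem_krylov_of_norm2_lt (hdec (m + 1) m.succ_pos (by omega))⟩

theorem IsGMRES.residv_notMem_krylov (hA : IsUnit A.det) (hG : IsGMRES A b x0 xG)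
    (hstar : A *ᵥ xstar = b) (hrk0 : residv A b (xG (k0 - 1)) ≠ 0)
    (hdec : ∀ k, 0 < k → k < k0 →
      norm2 (residv A b (xG k)) < norm2 (residv A b (xG (k - 1)))) {k : ℕ} (hk : k < k0) :
    residv A b (xG k) ∉ krylov A (residv A b x0) k := by
  have hr := hG.residv_ne_zero_of_le (Nat.le_sub_one_of_lt hk) hrk0
  cases k with
  | zero => simpa [krylov_zero] using hr
  | succ m =>
    exact hG.residv_succ_notMem_krylov hA hstar hr
      (hG.sub_notMem_krylov_of_norm2_lt (hdec (m + 1) m.succ_pos hk))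

theorem IsGMRES.qmap_sub_notMem_krylov (hA : IsUnit A.det) (hG : IsGMRES A b x0 xG)
    (hstar : A *ᵥ xstar = b) (hrk0 : residv A b (xG (k0 - 1)) ≠ 0)
    (hdec : ∀ k, 0 < k → k < k0 →
      norm2 (residv A b (xG k)) < norm2 (residv A b (xG (k - 1)))) {k : ℕ} (hk : k < k0) :
    qmap A b (xG k) - x0 ∉ krylov A (residv A b x0) k := fun hmem => by
  refine hG.residv_notMem_krylov hA hstar hrk0 hdec hk ?_
  rw [← sub_sub_cancel (xG k) (residv A b (xG k)), ← qmap_eq_sub_residv,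
    ← sub_sub_sub_cancel_right _ _ x0]
  exact sub_mem (hG.2 k).1 hmem

theorem IsGMRES.span_ngmres_directions_eq_krylov (hA : IsUnit A.det) (hG : IsGMRES A b x0 xG)
    (hstar : A *ᵥ xstar = b) (hrk0 : residv A b (xG (k0 - 1)) ≠ 0)
    (hdec : ∀ k, 0 < k → k < k0 →
      norm2 (residv A b (xG k)) < norm2 (residv A b (xG (k - 1)))) {k : ℕ} (hk : k < k0) :
    span ℝ ((fun i => qmap A b (xG k) - xG (k - i)) '' ↑(Finset.range (k + 1))) =
      krylov A (residv A b x0) (k + 1) := by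
  rw [← Set.image_image (g := fun j => qmap A b (xG k) - xG j) (f := (k - ·)),
    image_tsub_range_succ, span_image_sub_eq_sup _ _ (j₀ := 0) (by simp),
    hG.span_iterates_eq_krylov hdec hk, hG.1]
  exact (krylov_succ_eq_sup_of_notMem (hG.qmap_sub_mem_krylov_succ k)
    (hG.qmap_sub_notMem_krylov hA hstar hrk0 hdec hk)).symm

theorem ngmres_eq_gmres {xNG : ℕ → Fin n → ℝ} {β : ℕ → ℕ → ℝ} (hA : IsUnit A.det)
    (hNG : IsNGMRES A b x0 (fun k => k) xNG β) (hG : IsGMRES A b x0 xG)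
    (hstar : A *ᵥ xstar = b) (hrk0 : residv A b (xG (k0 - 1)) ≠ 0)
    (hdec : ∀ k, 0 < k → k < k0 →
      norm2 (residv A b (xG k)) < norm2 (residv A b (xG (k - 1)))) :
    ∀ j ≤ k0, xNG j = xG j := by
  intro j
  induction j using Nat.strong_induction_on with
  | _ j ih =>
  intro hj
  cases j with
  | zero => exact hNG.1.trans hG.1.symm
  | succ k =>
  have hupd := fun β' => ngmresUpdate_congr A b (fun i (hi : i ≤ k) => ih i (by omega) (by omega))
    β' k
  refine IsResidualMinimizer.eq hA ?_ (hG.2 (k + 1))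
  rw [← hG.span_ngmres_directions_eq_krylov hA hstar hrk0 hdec (by omega), (hNG.2 k).1, hupd]
  refine isResidualMinimizer_add_sum (subset_span ⟨k, by simp, by simp [hG.1]⟩) fun β' => ?_
  have hle := (hNG.2 k).2 β'
  rwa [(hNG.2 k).1, hupd, hupd] at hle

theorem aa_eq_qmap_gmres {xA : ℕ → Fin n → ℝ} {γ : ℕ → ℕ → ℝ} (hA : IsUnit A.det)
    (hG : IsGMRES A b x0 xG) (hAA : IsAA A b x0 (fun k => k) xA γ)
    (hstar : A *ᵥ xstar = b) (hrk0 : residv A b (xG (k0 - 1)) ≠ 0)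
    (hdec : ∀ k, 0 < k → k < k0 →
      norm2 (residv A b (xG k)) < norm2 (residv A b (xG (k - 1)))) :
    ∀ k ≤ k0, xA (k + 1) = qmap A b (xG k) := by
  intro k
  induction k using Nat.strong_induction_on with
  | _ k ih =>
  intro hk
  cases k with
  | zero => simp [(hAA.2 0).1, aaUpdate, hAA.1, hG.1]
  | succ m =>
  have hiter : span ℝ ((fun j => xA j - xA 0) '' ↑(Finset.range (m + 2))) =
      krylov A (residv A b x0) (m + 1) :=
    span_image_sub_eq_krylov fun j hj => by
      rw [ih j (by omega) (by omega), hAA.1]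
      exact ⟨hG.qmap_sub_mem_krylov_succ j, hG.qmap_sub_notMem_krylov hA hstar hrk0 hdec (by omega)⟩
  have hmin : IsResidualMinimizer A b x0 (krylov A (residv A b x0) (m + 1))
      (xA (m + 1) + ∑ i ∈ Finset.Icc 1 (m + 1), γ (m + 1) i • (xA (m + 1) - xA (m + 1 - i))) := by
    rw [← hiter, ← span_image_sub_Icc_one]
    refine isResidualMinimizer_add_sum (subset_span ⟨m + 1, by simp, by simp [hAA.1]⟩)
      fun c => ?_
    simpa only [aaObj_eq_residv] using (hAA.2 (m + 1)).2 c
  rw [(hAA.2 (m + 1)).1, aaUpdate_eq_qmap, hmin.eq hA (hG.2 (m + 1))]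

end StrictDecrease

theorem stmt3_general (n : ℕ) (A : Matrix (Fin n) (Fin n) ℝ) (b x0 xstar : Fin n → ℝ)
    (hA : IsUnit A.det)
    (xNG xG xA : ℕ → Fin n → ℝ) (β γ : ℕ → ℕ → ℝ)
    (hNG : IsNGMRES A b x0 (fun k => k) xNG β)
    (hG : IsGMRES A b x0 xG)
    (hAA : IsAA A b x0 (fun k => k) xA γ)
    (hstar : A.mulVec xstar = b)
    (k0 : ℕ)
    (hrk0 : residv A b (xG (k0 - 1)) ≠ 0)
    (hdec : ∀ k, 0 < k → k < k0 →
      norm2 (residv A b (xG k)) < norm2 (residv A b (xG (k - 1)))) :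
    ∀ j ≤ k0, xNG j = xG j ∧
      xA (j + 1) = qmap A b (xNG j) ∧
      qmap A b (xNG j) = xNG j - residv A b (xNG j) := by
  intro j hj
  have hng := ngmres_eq_gmres hA hNG hG hstar hrk0 hdec j hj
  exact ⟨hng, hng ▸ aa_eq_qmap_gmres hA hG hAA hstar hrk0 hdec j hj, qmap_eq_sub_residv A b _⟩

/-- with `A` invertible, full NGMRES and GMRES iterates coincide up to `k0`,
and the full AA iterates satisfy `x_{j+1}^A = q(x_j^{NG}) = x_j^{NG} - r_j^{NG}`. -/
theorem stmt3 (n : ℕ) (A : Matrix (Fin n) (Fin n) ℝ) (b x0 xstar : Fin n → ℝ)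
    (hA : IsUnit A.det)
    (xNG xG xA : ℕ → Fin n → ℝ) (β γ : ℕ → ℕ → ℝ)
    (hNG : IsNGMRES A b x0 (fun k => k) xNG β)
    (hG : IsGMRES A b x0 xG)
    (hAA : IsAA A b x0 (fun k => k) xA γ)
    (hstar : A.mulVec xstar = b) (hx0 : x0 ≠ xstar)
    (k0 : ℕ) (hk0 : 0 < k0)
    (hrk0 : residv A b (xG (k0 - 1)) ≠ 0)
    (hdec : ∀ k, 0 < k → k < k0 →
      norm2 (residv A b (xG k)) < norm2 (residv A b (xG (k - 1)))) :
    ∀ j ≤ k0, xNG j = xG j ∧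
      xA (j + 1) = qmap A b (xNG j) ∧
      qmap A b (xNG j) = xNG j - residv A b (xNG j) :=
  stmt3_general n A b x0 xstar hA xNG xG xA β γ hNG hG hAA hstar k0 hrk0 hdec
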